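/- Define g₂ : [0,1] → ℝ by g₂(0) = 2/3 and, for z ∈ (0,1], g₂(z) = (−z² + 6z − 3 + √(9−z)·(1−z)^{3/2}) / (2z). Then g₂ takes values in [0,1], and for every z ∈ [0,1] it satisfies the functional equation g₂(z) = 3 / (6 − z − g₂(z) − g₂(g₂(z))). -/

import Mathlib

/-! For `z ∈ [0,1]`, `w = g₂(z)` is the larger root in `w` of
`P(z, w) = g2Poly z w = z w² + (z² − 6z + 3) w + 3z − 2`, whose discriminant is
`(9 − z)(1 − z)³` (at `z = 0`, `P` is linear with root `2/3`). Since `P` is symmetric, `z` is a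
root of `P(w, ·)` too, and the bound `g₂(z) ≥ 2 / (3 − z²)` shows that it is the smaller one. By
Vieta the larger root `g₂(w)` is `6 − w − 3/w − z`, that is, `6 − z − w − g₂(w) = 3/w`. -/

namespace VEP

/-- The generating function `g₂` for the critical geometric model with uniform `{-1, 0, 1}`
displacements: `g₂(0) = 2/3` and for `z ≠ 0`,
`g₂(z) = (−z² + 6z − 3 + √(9−z)(1−z)^{3/2}) / (2z)`. -/
noncomputable def g2 (z : ℝ) : ℝ :=
  if z = 0 then 2 / 3
  else (-z ^ 2 + 6 * z - 3 + Real.sqrt (9 - z) * (1 - z) ^ ((3 : ℝ) / 2)) / (2 * z)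

section Quadratic

variable {K : Type*} [Field K] [LinearOrder K] [IsStrictOrderedRing K] {a b c r x : K}

lemma le_of_quadratic_nonpos (ha : 0 < a) (hr : a * r ^ 2 + b * r + c = 0)
    (hr' : 0 ≤ 2 * a * r + b) (hx : a * x ^ 2 + b * x + c ≤ 0) : x ≤ r := by
  by_contra! hlt
  have hfactor : a * x ^ 2 + b * x + c = (x - r) * (a * (x - r) + (2 * a * r + b)) := by
    linear_combination hr
  have : 0 < (x - r) * (a * (x - r) + (2 * a * r + b)) := by
    have : 0 < x - r := sub_pos.mpr hlt
    positivity
  linarith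

lemma le_of_quadratic_nonneg (ha : 0 < a) (hr : a * r ^ 2 + b * r + c = 0)
    (hx : 0 ≤ a * x ^ 2 + b * x + c) (hx' : 0 ≤ 2 * a * x + b) : r ≤ x := by
  by_contra! hlt
  have hfactor : a * x ^ 2 + b * x + c = (x - r) * (a * (x + r) + b) := by
    linear_combination hr
  have : 0 < a * (x + r) + b := by nlinarith
  have : (x - r) * (a * (x + r) + b) < 0 := mul_neg_of_neg_of_pos (sub_neg.mpr hlt) this
  linarith

end Quadratic

def g2Poly (z w : ℝ) : ℝ := z * w ^ 2 + (z ^ 2 - 6 * z + 3) * w + (3 * z - 2)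

lemma g2Poly_comm (z w : ℝ) : g2Poly z w = g2Poly w z := by
  unfold g2Poly; ring

lemma g2_zero : g2 0 = 2 / 3 := if_pos rfl

lemma g2_of_pos {z : ℝ} (hz0 : 0 < z) (hz1 : z ≤ 1) :
    g2 z = (-z ^ 2 + 6 * z - 3 + Real.sqrt ((9 - z) * (1 - z) ^ 3)) / (2 * z) := by
  have h1 : 0 ≤ 1 - z := by linarith
  have hpow : (1 - z) ^ ((3 : ℝ) / 2) = Real.sqrt ((1 - z) ^ 3) := by
    rw [Real.sqrt_eq_rpow, ← Real.rpow_natCast, ← Real.rpow_mul h1]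
    norm_num
  rw [g2, if_neg hz0.ne', hpow, Real.sqrt_mul (by linarith)]

lemma g2_eq_iff {z : ℝ} (hz : z ∈ Set.Icc (0 : ℝ) 1) (w : ℝ) :
    g2 z = w ↔ g2Poly z w = 0 ∧ 0 ≤ 2 * z * w + (z ^ 2 - 6 * z + 3) := by
  obtain ⟨hz0, hz1⟩ := hz
  rcases hz0.eq_or_lt with rfl | hzpos
  · rw [g2_zero, g2Poly]
    constructor
    · rintro rfl; norm_num
    · rintro ⟨h, -⟩; linarith
  have hdisc : 0 ≤ (9 - z) * (1 - z) ^ 3 := mul_nonneg (by linarith) (pow_nonneg (by linarith) 3)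
  have hsq : (2 * z * w + (z ^ 2 - 6 * z + 3)) ^ 2 - (9 - z) * (1 - z) ^ 3
      = 4 * z * g2Poly z w := by
    unfold g2Poly; ring
  rw [g2_of_pos hzpos hz1, div_eq_iff (by positivity)]
  constructor
  · intro h
    have hroot : Real.sqrt ((9 - z) * (1 - z) ^ 3) = 2 * z * w + (z ^ 2 - 6 * z + 3) := by
      linarith
    refine ⟨?_, hroot ▸ Real.sqrt_nonneg _⟩
    rw [← hroot, Real.sq_sqrt hdisc, sub_self] at hsq
    exact (mul_eq_zero.mp hsq.symm).resolve_left (by positivity)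
  · rintro ⟨hK, hsign⟩
    rw [hK, mul_zero, sub_eq_zero] at hsq
    rw [← hsq, Real.sqrt_sq hsign]
    ring

lemma two_div_le_g2 {z : ℝ} (hz : z ∈ Set.Icc (0 : ℝ) 1) : 2 / (3 - z ^ 2) ≤ g2 z := by
  obtain ⟨hz0, hz1⟩ := hz
  rcases hz0.eq_or_lt with rfl | hzpos
  · rw [g2_zero]; norm_num
  obtain ⟨hK, hsign⟩ := (g2_eq_iff ⟨hz0, hz1⟩ (g2 z)).mp rfl
  have h3 : 0 < 3 - z ^ 2 := by nlinarith
  refine le_of_quadratic_nonpos hzpos hK hsign ?_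
  have hval : z * (2 / (3 - z ^ 2)) ^ 2 + (z ^ 2 - 6 * z + 3) * (2 / (3 - z ^ 2)) + (3 * z - 2)
      = -(z * (1 - z) ^ 3 * (3 * z + 5)) / (3 - z ^ 2) ^ 2 := by
    field_simp; ring
  rw [hval]
  have h1 : 0 ≤ 1 - z := by linarith
  exact div_nonpos_of_nonpos_of_nonneg (neg_nonpos.mpr (by positivity)) (sq_nonneg _)

lemma g2_le_one {z : ℝ} (hz : z ∈ Set.Icc (0 : ℝ) 1) : g2 z ≤ 1 := by
  obtain ⟨hz0, hz1⟩ := hz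
  rcases hz0.eq_or_lt with rfl | hzpos
  · rw [g2_zero]; norm_num
  obtain ⟨hK, -⟩ := (g2_eq_iff ⟨hz0, hz1⟩ (g2 z)).mp rfl
  exact le_of_quadratic_nonneg hzpos hK (by nlinarith) (by nlinarith)

lemma g2_pos {z : ℝ} (hz : z ∈ Set.Icc (0 : ℝ) 1) : 0 < g2 z := by
  have h3 : 0 < 3 - z ^ 2 := by nlinarith [hz.1, hz.2]
  exact (div_pos two_pos h3).trans_le (two_div_le_g2 hz)

lemma two_mul_g2_mul_add_nonpos {z : ℝ} (hz : z ∈ Set.Icc (0 : ℝ) 1) :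
    2 * g2 z * z + (g2 z ^ 2 - 6 * g2 z + 3) ≤ 0 := by
  rcases hz.1.eq_or_lt with rfl | hzpos
  · rw [g2_zero]; norm_num
  obtain ⟨hK, -⟩ := (g2_eq_iff hz (g2 z)).mp rfl
  have h3 : 0 < 3 - z ^ 2 := by nlinarith [hz.2]
  have hlower : 2 ≤ (3 - z ^ 2) * g2 z := (div_le_iff₀' h3).mp (two_div_le_g2 hz)
  have hprod : z * (2 * g2 z * z + (g2 z ^ 2 - 6 * g2 z + 3)) = 2 - (3 - z ^ 2) * g2 z := by
    unfold g2Poly at hK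
    linear_combination hK
  exact nonpos_of_mul_nonpos_right (by linarith) hzpos

lemma g2_g2 {z : ℝ} (hz : z ∈ Set.Icc (0 : ℝ) 1) : g2 (g2 z) = 6 - g2 z - 3 / g2 z - z := by
  set w := g2 z with hw
  have hwpos : 0 < w := g2_pos hz
  obtain ⟨hK, -⟩ := (g2_eq_iff hz w).mp hw.symm
  rw [g2_eq_iff ⟨hwpos.le, g2_le_one hz⟩]
  have hvieta : g2Poly w (6 - w - 3 / w - z) = g2Poly w z := by
    unfold g2Poly; field_simp; ring
  have hsign : 2 * w * (6 - w - 3 / w - z) + (w ^ 2 - 6 * w + 3)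
      = -(2 * w * z + (w ^ 2 - 6 * w + 3)) := by
    field_simp; ring
  rw [hvieta, ← g2Poly_comm, hsign]
  exact ⟨hK, neg_nonneg.mpr (two_mul_g2_mul_add_nonpos hz)⟩

/-- `g₂` maps `[0,1]` into `[0,1]` and satisfies `g₂(z) = 3 / (6 − z − g₂(z) − g₂(g₂(z)))`. -/
theorem g2_functional_equation :
    (∀ z ∈ Set.Icc (0 : ℝ) 1, g2 z ∈ Set.Icc (0 : ℝ) 1) ∧
    (∀ z ∈ Set.Icc (0 : ℝ) 1, g2 z = 3 / (6 - z - g2 z - g2 (g2 z))) := by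
  refine ⟨fun z hz => ⟨(g2_pos hz).le, g2_le_one hz⟩, fun z hz => ?_⟩
  have hw := g2_pos hz
  rw [g2_g2 hz]
  field_simp
  ring

end VEP
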